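/- arXiv:2012.00738 — 3 statements merged into one kernel-verified Lean document; each statement's English description precedes it below -/
import Mathlib

section
/- For all integers k ≥ 2, all real q ≥ k, and all integers ℓ with 1 ≤ ℓ ≤ q: (ℓ+1)·((q-ℓ)/(k-1))^(k-1) ≤ e·(q/k)^k. -/
/-!
Weighted AM-GM with weights `1/k` and `(k-1)/k` bounds the left-hand side by `((q + 1) / k) ^ k`,
and `(1 + 1/q) ^ k ≤ exp (k / q) ≤ e` because `k ≤ q`.
-/

namespace Real

theorem mul_pow_le_arith_mean_pow {a b : ℝ} (ha : 0 ≤ a) (hb : 0 ≤ b) (n : ℕ) :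
    a * b ^ n ≤ ((a + n * b) / (n + 1)) ^ (n + 1) := by
  have hn : (0 : ℝ) < n + 1 := by positivity
  have hw : 1 / ((n : ℝ) + 1) + n / (n + 1) = 1 := by field_simp; ring
  have amgm := geom_mean_le_arith_mean2_weighted (by positivity) (by positivity) ha hb hw
  have hmean : 1 / ((n : ℝ) + 1) * a + n / (n + 1) * b = (a + n * b) / (n + 1) := by
    field_simp
  have hgeom : (a ^ (1 / ((n : ℝ) + 1)) * b ^ ((n : ℝ) / (n + 1))) ^ (n + 1) = a * b ^ n := by
    rw [mul_pow, ← rpow_natCast, ← rpow_natCast (b ^ _), ← rpow_mul ha, ← rpow_mul hb]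
    push_cast
    rw [one_div_mul_cancel hn.ne', div_mul_cancel₀ _ hn.ne', rpow_one, rpow_natCast]
  rw [← hgeom, ← hmean]
  exact pow_le_pow_left₀ (by positivity) amgm _

theorem one_add_inv_pow_le_exp_one {q : ℝ} {k : ℕ} (hq : 0 < q) (hkq : (k : ℝ) ≤ q) :
    (1 + q⁻¹) ^ k ≤ exp 1 :=
  calc (1 + q⁻¹) ^ k ≤ exp q⁻¹ ^ k := by
        gcongr
        linarith [add_one_le_exp q⁻¹]
    _ = exp (k / q) := by rw [← exp_nat_mul, div_eq_mul_inv]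
    _ ≤ exp 1 := exp_le_exp.mpr ((div_le_one hq).mpr hkq)

end Real

theorem stmt_2_general (k : ℕ) (hk : 2 ≤ k) (q : ℝ) (hq : (k : ℝ) ≤ q)
    (ℓ : ℕ) (hℓq : (ℓ : ℝ) ≤ q) :
    ((ℓ : ℝ) + 1) * ((q - ℓ) / ((k : ℝ) - 1)) ^ (k - 1) ≤
      Real.exp 1 * (q / k) ^ k := by
  obtain ⟨n, rfl⟩ : ∃ n, k = n + 1 := ⟨k - 1, by omega⟩
  have hn : (0 : ℝ) < n := by exact_mod_cast (by omega : 0 < n)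
  have hq0 : 0 < q := by push_cast at hq; linarith
  have hb : 0 ≤ (q - ℓ) / n := div_nonneg (by linarith) hn.le
  have hsum : (ℓ + 1 + n * ((q - ℓ) / n)) / (n + 1) = (1 + q⁻¹) * (q / (n + 1)) := by
    field_simp
    ring
  push_cast
  rw [add_sub_cancel_right]
  calc ((ℓ : ℝ) + 1) * ((q - ℓ) / n) ^ n
      ≤ ((1 + q⁻¹) * (q / (n + 1))) ^ (n + 1) := by
        rw [← hsum]
        exact Real.mul_pow_le_arith_mean_pow (by positivity) hb n
    _ ≤ Real.exp 1 * (q / (n + 1)) ^ (n + 1) := by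
        rw [mul_pow]
        gcongr
        exact Real.one_add_inv_pow_le_exp_one hq0 hq

theorem stmt_2 (k : ℕ) (hk : 2 ≤ k) (q : ℝ) (hq : (k : ℝ) ≤ q)
    (ℓ : ℕ) (hℓ : 1 ≤ ℓ) (hℓq : (ℓ : ℝ) ≤ q) :
    ((ℓ : ℝ) + 1) * ((q - ℓ) / ((k : ℝ) - 1)) ^ (k - 1) ≤
      Real.exp 1 * (q / k) ^ k :=
  stmt_2_general k hk q hq ℓ hℓq
end

section
/- Let n ≥ 1, k ≥ 1 be integers, p ∈ [0,1] a real, and set n' = np - 1. Then ∑_{j=1}^{k} P_j · ⌈n'·j/k⌉ ≤ np·(1 - (k-1)/(2k)·p) + 1, where P_j = (1/n)(⌈n'·j/k⌉ - ⌈n'·(j-1)/k⌉) for 1 ≤ j ≤ k-1 and P_k = 1 - (1/n)·⌈n'·(k-1)/k⌉, assuming n' ≥ 0. -/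
open Finset

lemma sum_Icc_cast_id (m : ℕ) : (∑ j ∈ Finset.Icc 1 m, (j:ℝ)) = m*(m+1)/2 := by
  induction m with
  | zero => simp
  | succ n ih =>
    rw [Finset.sum_Icc_succ_top (by omega : 1 ≤ n+1), ih]
    push_cast; ring

lemma abel_key (c : ℕ → ℝ) (h0 : c 0 = 0) (a b : ℝ) (m : ℕ) :
    ∑ j ∈ Finset.Icc 1 m, (c j - c (j-1)) * (a * j + b) =
      a * ((m+1) * c m - ∑ j ∈ Finset.Icc 1 m, c j) + b * c m := by
  induction m with
  | zero => simp [h0]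
  | succ n ih =>
    rw [Finset.sum_Icc_succ_top (by omega : 1 ≤ n+1),
        Finset.sum_Icc_succ_top (by omega : 1 ≤ n+1), ih]
    simp only [Nat.add_sub_cancel]
    push_cast; ring

theorem stmt_6 (n k : ℕ) (hn : 1 ≤ n) (hk : 1 ≤ k) (hkn : k ≤ n)
    (p : ℝ) (hp0 : 0 ≤ p) (hp1 : p ≤ 1) (hn' : 0 ≤ (n : ℝ) * p - 1) :
    (∑ j ∈ Finset.Icc 1 k,
      (if j < k then
        (1 / (n : ℝ)) * ((⌈((n : ℝ) * p - 1) * j / k⌉ : ℝ) - (⌈((n : ℝ) * p - 1) * ((j : ℝ) - 1) / k⌉ : ℝ))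
      else
        1 - (1 / (n : ℝ)) * (⌈((n : ℝ) * p - 1) * ((k : ℝ) - 1) / k⌉ : ℝ)) *
        (⌈((n : ℝ) * p - 1) * j / k⌉ : ℝ)) ≤
    (n : ℝ) * p * (1 - ((k : ℝ) - 1) / (2 * k) * p) + 1 := by
  obtain ⟨m, rfl⟩ : ∃ m, k = m + 1 := ⟨k - 1, by omega⟩
  have hn0 : (0:ℝ) < n := by positivity
  have hm0 : (0:ℝ) < (m:ℝ) + 1 := by positivity
  set N : ℝ := (n:ℝ) * p - 1 with hN
  set c : ℕ → ℝ := fun j => ((⌈N * (j:ℝ) / ((m:ℝ)+1)⌉ : ℤ) : ℝ) with hc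
  have hc0 : c 0 = 0 := by simp [hc]
  have hle : ∀ j : ℕ, N * (j:ℝ) / ((m:ℝ)+1) ≤ c j := fun j => Int.le_ceil _
  have hlt : ∀ j : ℕ, c j ≤ N * (j:ℝ) / ((m:ℝ)+1) + 1 :=
    fun j => le_of_lt (Int.ceil_lt_add_one _)
  have hmono : ∀ j : ℕ, c (j-1) ≤ c j := by
    intro j
    have h : N * ((j-1 : ℕ):ℝ) / ((m:ℝ)+1) ≤ N * (j:ℝ) / ((m:ℝ)+1) := by
      gcongr
      exact_mod_cast Nat.sub_le j 1
    simp only [hc]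
    exact_mod_cast Int.ceil_le_ceil h
  have hcnn : ∀ j : ℕ, 0 ≤ c j := by
    intro j
    refine le_trans ?_ (hle j)
    positivity
  -- rewrite the sum
  have hsum : (∑ j ∈ Finset.Icc 1 (m+1),
      (if j < m+1 then
        (1 / (n : ℝ)) * ((⌈N * j / ((m+1:ℕ):ℝ)⌉ : ℝ) - (⌈N * ((j : ℝ) - 1) / ((m+1:ℕ):ℝ)⌉ : ℝ))
      else
        1 - (1 / (n : ℝ)) * (⌈N * (((m+1:ℕ) : ℝ) - 1) / ((m+1:ℕ):ℝ)⌉ : ℝ)) *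
        (⌈N * j / ((m+1:ℕ):ℝ)⌉ : ℝ))
      = (∑ j ∈ Finset.Icc 1 m, (1/(n:ℝ)) * (c j - c (j-1)) * c j)
        + (1 - (1/(n:ℝ)) * c m) * c (m+1) := by
    rw [Finset.sum_Icc_succ_top (by omega : 1 ≤ m+1)]
    congr 1
    · apply Finset.sum_congr rfl
      intro j hj
      simp only [Finset.mem_Icc] at hj
      rw [if_pos (by omega)]
      have h1 : ((j:ℝ) - 1) = ((j - 1 : ℕ) : ℝ) := by
        have := hj.1; push_cast [this]; ring
      have h2 : ((m+1:ℕ):ℝ) = (m:ℝ) + 1 := by push_cast; ring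
      rw [h1, h2]
    · rw [if_neg (by omega)]
      simp only [hc]
      push_cast
      norm_num
  rw [hsum]
  have htop : (1 - (1/(n:ℝ)) * c m) * c (m+1) ≤ (1 - (1/(n:ℝ)) * c m) * (N + 1) := by
    have hcm : c m ≤ (n:ℝ) := by
      refine le_trans (hlt m) ?_
      have : N * (m:ℝ) / ((m:ℝ)+1) ≤ N := by
        rw [div_le_iff₀ hm0]
        nlinarith
      nlinarith
    have h1 : 0 ≤ 1 - (1/(n:ℝ)) * c m := by
      rw [sub_nonneg, one_div, ← div_eq_inv_mul, div_le_one hn0]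
      exact hcm
    apply mul_le_mul_of_nonneg_left _ h1
    refine le_trans (hlt (m+1)) ?_
    have : N * ((m+1:ℕ):ℝ) / ((m:ℝ)+1) = N := by
      push_cast; field_simp
    rw [this]
  have hterm : ∀ j ∈ Finset.Icc 1 m,
      (1/(n:ℝ)) * (c j - c (j-1)) * c j ≤
      (c j - c (j-1)) * (N/((m:ℝ)+1) * (j:ℝ) + 1) * (1/(n:ℝ)) := by
    intro j hj
    have h1 : 0 ≤ c j - c (j-1) := sub_nonneg.mpr (hmono j)
    have h2 : c j ≤ N/((m:ℝ)+1) * (j:ℝ) + 1 :=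
      le_trans (hlt j) (le_of_eq (by ring))
    calc (1/(n:ℝ)) * (c j - c (j-1)) * c j
        = (c j - c (j-1)) * c j * (1/(n:ℝ)) := by ring
      _ ≤ (c j - c (j-1)) * (N/((m:ℝ)+1) * (j:ℝ) + 1) * (1/(n:ℝ)) := by
          apply mul_le_mul_of_nonneg_right _ (by positivity)
          exact mul_le_mul_of_nonneg_left h2 h1
  set T : ℝ := ∑ j ∈ Finset.Icc 1 m, c j with hT
  have hTlb : N * (m:ℝ) / 2 ≤ T := by
    have h1 : ∑ j ∈ Finset.Icc 1 m, N * (j:ℝ) / ((m:ℝ)+1) ≤ T :=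
      Finset.sum_le_sum (fun j _ => hle j)
    have h2 : ∑ j ∈ Finset.Icc 1 m, N * (j:ℝ) / ((m:ℝ)+1)
        = N / ((m:ℝ)+1) * ∑ j ∈ Finset.Icc 1 m, (j:ℝ) := by
      rw [Finset.mul_sum]
      exact Finset.sum_congr rfl (fun j _ => by ring)
    rw [h2, sum_Icc_cast_id] at h1
    have h3 : N / ((m:ℝ)+1) * ((m:ℝ)*((m:ℝ)+1)/2) = N * (m:ℝ) / 2 := by
      field_simp
    rw [h3] at h1; exact h1
  have habel : ∑ j ∈ Finset.Icc 1 m, (c j - c (j-1)) * (N/((m:ℝ)+1) * (j:ℝ) + 1)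
      = N/((m:ℝ)+1) * (((m:ℝ)+1) * c m - T) + 1 * c m := by
    exact abel_key c hc0 (N/((m:ℝ)+1)) 1 m
  calc (∑ j ∈ Finset.Icc 1 m, (1/(n:ℝ)) * (c j - c (j-1)) * c j)
        + (1 - (1/(n:ℝ)) * c m) * c (m+1)
      ≤ (∑ j ∈ Finset.Icc 1 m, (c j - c (j-1)) * (N/((m:ℝ)+1) * (j:ℝ) + 1) * (1/(n:ℝ)))
        + (1 - (1/(n:ℝ)) * c m) * (N + 1) := by
        exact add_le_add (Finset.sum_le_sum hterm) htop
    _ = (N/((m:ℝ)+1) * (((m:ℝ)+1) * c m - T) + 1 * c m) * (1/(n:ℝ))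
        + (1 - (1/(n:ℝ)) * c m) * (N + 1) := by
        rw [← Finset.sum_mul, habel]
    _ = N + 1 - N * T / (((m:ℝ)+1) * (n:ℝ)) := by
        field_simp; ring
    _ ≤ N + 1 - N * (N * (m:ℝ)/2) / (((m:ℝ)+1) * (n:ℝ)) := by
        have h1 : N * (N*(m:ℝ)/2) ≤ N * T := mul_le_mul_of_nonneg_left hTlb hn'
        have hd : (0:ℝ) < ((m:ℝ)+1) * (n:ℝ) := by positivity
        gcongr
    _ ≤ (n:ℝ) * p * (1 - (((m+1:ℕ):ℝ) - 1) / (2 * ((m+1:ℕ):ℝ)) * p) + 1 := by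
        have hn1 : (1:ℝ) ≤ (n:ℝ) := by exact_mod_cast hn
        have key : (n:ℝ)*p*(1 - (((m+1:ℕ):ℝ)-1)/(2*((m+1:ℕ):ℝ))*p) + 1
            - (N + 1 - N*(N*(m:ℝ)/2)/(((m:ℝ)+1)*(n:ℝ)))
            = (2*((m:ℝ)+1)*(n:ℝ) - (2*(n:ℝ)*p-1)*(m:ℝ))/(2*((m:ℝ)+1)*(n:ℝ)) := by
          rw [hN]; push_cast; field_simp; ring
        have hnum : 0 ≤ 2*((m:ℝ)+1)*(n:ℝ) - (2*(n:ℝ)*p-1)*(m:ℝ) := by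
          have hmn : (0:ℝ) ≤ (m:ℝ) := by positivity
          nlinarith [mul_le_mul_of_nonneg_left hp1 (show (0:ℝ) ≤ 2*(n:ℝ)*(m:ℝ) by positivity)]
        have hden : (0:ℝ) < 2*((m:ℝ)+1)*(n:ℝ) := by positivity
        have := div_nonneg hnum (le_of_lt hden)
        linarith [key ▸ this]
end

section
/- For any permutation σ of {1, ..., n} with σ ≠ id, there exists an index i with 1 ≤ i ≤ n-1 such that σ(i+1) ≤ i ≤ σ(i). -/
theorem stmt_19 (n : ℕ) (hn : 2 ≤ n) (σ : Equiv.Perm (Fin n)) (hσ : σ ≠ 1) :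
    ∃ i j : Fin n, (j : ℕ) = (i : ℕ) + 1 ∧ ((σ j : ℕ) ≤ i ∧ (i : ℕ) ≤ σ i) := by
  have hex : ∃ m : Fin n, (σ m : ℕ) < m := by
    by_contra h
    push_neg at h
    apply hσ
    ext k
    have hsum : ∑ k : Fin n, (σ k : ℕ) = ∑ k : Fin n, (k : ℕ) :=
      Equiv.sum_comp σ (fun k : Fin n => (k : ℕ))
    have := (Finset.sum_eq_sum_iff_of_le (fun i _ => h i)).mp hsum.symm k (Finset.mem_univ k)
    simpa using this.symm
  obtain ⟨m, hm⟩ := hex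
  have hm1 : 1 ≤ (m : ℕ) := Nat.pos_of_ne_zero (by omega)
  set S : Finset (Fin n) := Finset.univ.filter (fun k : Fin n => (k : ℕ) < m ∧ (k : ℕ) ≤ σ k)
    with hS
  have hnpos : 0 < n := by omega
  have h0 : (⟨0, hnpos⟩ : Fin n) ∈ S := by
    simp only [hS, Finset.mem_filter, Finset.mem_univ, true_and]
    exact ⟨hm1, Nat.zero_le _⟩
  have hSne : S.Nonempty := ⟨_, h0⟩
  set i : Fin n := S.max' hSne with hi
  have hiS : i ∈ S := S.max'_mem hSne
  simp only [hS, Finset.mem_filter] at hiS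
  obtain ⟨-, hilt, hile⟩ := hiS
  have hj : (i : ℕ) + 1 < n := by
    have := m.isLt
    omega
  refine ⟨i, ⟨(i : ℕ) + 1, hj⟩, rfl, ?_, hile⟩
  set j : Fin n := ⟨(i : ℕ) + 1, hj⟩ with hjdef
  by_cases hjm : (j : ℕ) = (m : ℕ)
  · have : (σ j : ℕ) < (j : ℕ) := by
      have : j = m := Fin.ext hjm
      rw [this]; exact hm
    simpa [hjdef] using Nat.lt_succ_iff.mp this
  · by_contra hc
    push_neg at hc
    have hjS : j ∈ S := by
      simp only [hS, Finset.mem_filter]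
      refine ⟨Finset.mem_univ _, ?_, hc⟩
      have hj' : (j : ℕ) = (i : ℕ) + 1 := rfl
      omega
    have := S.le_max' j hjS
    rw [← hi] at this
    have : (j : ℕ) ≤ (i : ℕ) := this
    simp [hjdef] at this
end
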